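/- For any infinitary propositional formula F over σ, any set A ⊆ σ of atoms, and any interpretation I ⊆ σ: I is an A-stable model of F if and only if I is a stable model of the formula F ∧ ⋀_{p ∈ σ \ A} (p ∨ ¬p). -/

import Mathlib

/-- Infinitary propositional formulas over signature `σ`:
atoms, conjunctions and disjunctions of (index-)sets of formulas, implication. -/
inductive Formula (σ : Type) : Type 1
  | atom : σ → Formula σ
  | conj : (ι : Type) → (ι → Formula σ) → Formula σ
  | disj : (ι : Type) → (ι → Formula σ) → Formula σ
  | imp : Formula σ → Formula σ → Formula σ

namespace Formula

variable {σ : Type}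

/-- `⊥` is the empty disjunction. -/
def bot : Formula σ := Formula.disj Empty (fun e => e.elim)

/-- Binary conjunction `F ∧ G`. -/
def and (F G : Formula σ) : Formula σ := Formula.conj Bool (fun b => if b then F else G)

/-- Binary disjunction `F ∨ G`. -/
def or (F G : Formula σ) : Formula σ := Formula.disj Bool (fun b => if b then F else G)

/-- Negation `¬F` abbreviates `F → ⊥`. -/
def neg (F : Formula σ) : Formula σ := Formula.imp F bot

/-- Conjunction of a set of atoms. -/
def conjAtoms (S : Set σ) : Formula σ := Formula.conj S (fun p => Formula.atom p.val)

/-- Satisfaction of an infinitary formula by an interpretation `I ⊆ σ`. -/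
def Sat (I : Set σ) : Formula σ → Prop
  | .atom p => p ∈ I
  | .conj _ f => ∀ i, Sat I (f i)
  | .disj _ f => ∃ i, Sat I (f i)
  | .imp F G => Sat I F → Sat I G

open Classical in
/-- The reduct `F^I`. -/
noncomputable def reduct (I : Set σ) : Formula σ → Formula σ
  | .atom p => if p ∈ I then Formula.atom p else bot
  | .conj ι f => Formula.conj ι (fun i => reduct I (f i))
  | .disj ι f => Formula.disj ι (fun i => reduct I (f i))
  | .imp F G => if Sat I (Formula.imp F G) then Formula.imp (reduct I F) (reduct I G) else bot

/-- `I` is an `A`-stable model of `F`: `I` is minimal w.r.t. `≤_A`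
(`J ≤_A I` iff `J ⊆ I` and `I \ J ⊆ A`) among interpretations satisfying `F^I`. -/
def AStable (A : Set σ) (I : Set σ) (F : Formula σ) : Prop :=
  Sat I (reduct I F) ∧ ∀ J : Set σ, J ⊆ I → I \ J ⊆ A → Sat J (reduct I F) → J = I

/-- A stable model is a `σ`-stable model. -/
def Stable (I : Set σ) (F : Formula σ) : Prop := AStable Set.univ I F

/-- The strictly positive atoms `P(F)`. -/
def spos : Formula σ → Set σ
  | .atom p => {p}
  | .conj _ f => ⋃ i, spos (f i)
  | .disj _ f => ⋃ i, spos (f i)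
  | .imp _ H => spos H

/-- `F` is (syntactically) the formula `⊥`, i.e. an empty disjunction. -/
def IsBot : Formula σ → Prop
  | .disj ι _ => IsEmpty ι
  | _ => False

open Classical in
mutual
/-- Positive nonnegated atoms `Pnn(F)`. -/
noncomputable def pnn : Formula σ → Set σ
  | .atom p => {p}
  | .conj _ f => ⋃ i, pnn (f i)
  | .disj _ f => ⋃ i, pnn (f i)
  | .imp G H => if IsBot H then ∅ else nnn G ∪ pnn H

/-- Negative nonnegated atoms `Nnn(F)`. -/
noncomputable def nnn : Formula σ → Set σ
  | .atom _ => ∅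
  | .conj _ f => ⋃ i, nnn (f i)
  | .disj _ f => ⋃ i, nnn (f i)
  | .imp G H => if IsBot H then ∅ else pnn G ∪ nnn H
end

/-- The rules of a formula, as antecedent/consequent pairs. -/
def rules : Formula σ → Set (Formula σ × Formula σ)
  | .atom _ => ∅
  | .conj _ f => ⋃ i, rules (f i)
  | .disj _ f => ⋃ i, rules (f i)
  | .imp G H => insert (G, H) (rules H)

/-- Edge relation of the positive dependency graph `DG_A[F]` (vertex set `A`). -/
noncomputable def DGEdge (F : Formula σ) (A : Set σ) (p q : σ) : Prop :=
  p ∈ A ∧ q ∈ A ∧ ∃ R ∈ rules F, p ∈ spos R.2 ∧ q ∈ pnn R.1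

/-- The atoms occurring in a formula. -/
def atoms : Formula σ → Set σ
  | .atom p => {p}
  | .conj _ f => ⋃ i, atoms (f i)
  | .disj _ f => ⋃ i, atoms (f i)
  | .imp G H => atoms G ∪ atoms H

/-- `G` is a definition for the set `Q` of atoms: a conjunction of formulas
`H ∧ C^∧ → q` with `q ∈ Q`, `C ⊆ Q`, and no atom of `Q` occurring in `H`. -/
def IsDefinition (Q : Set σ) (G : Formula σ) : Prop :=
  ∃ (ι : Type) (g : ι → Formula σ), G = Formula.conj ι g ∧
    ∀ i, ∃ (H : Formula σ) (C : Set σ) (q : σ),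
      q ∈ Q ∧ C ⊆ Q ∧ (∀ p ∈ Q, p ∉ atoms H) ∧
      g i = Formula.imp (Formula.and H (conjAtoms C)) (Formula.atom q)

end Formula

section Graph

variable {V : Type*}

/-- An infinite walk in the directed graph with edge relation `E`. -/
def IsInfWalk (E : V → V → Prop) (w : ℕ → V) : Prop := ∀ i, E (w i) (w (i + 1))

/-- The partition `{P₁, P₂}` is infinitely separable: every infinite walk
visits `P₁` or `P₂` only finitely often. -/
def InfSeparable (E : V → V → Prop) (P1 P2 : Set V) : Prop :=
  ∀ w : ℕ → V, IsInfWalk E w → {i | w i ∈ P1}.Finite ∨ {i | w i ∈ P2}.Finite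

/-- `u` and `v` are in the same strongly connected component:
each is reachable from the other. -/
def SameSCC (E : V → V → Prop) (u v : V) : Prop :=
  Relation.ReflTransGen E u v ∧ Relation.ReflTransGen E v u

/-- The partition `{P₁, P₂}` is separable: every strongly connected
component is contained in `P₁` or in `P₂`. -/
def Separable (E : V → V → Prop) (P1 P2 : Set V) : Prop :=
  ∀ u v, SameSCC E u v → ((u ∈ P1 ∧ v ∈ P1) ∨ (u ∈ P2 ∧ v ∈ P2))

end Graph

/-! The reduct of the choice formulas `⋀_{p ∉ A} (p ∨ ¬p)` is satisfied by `J` exactly when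
`I \ A ⊆ J`, and this is equivalent to `I \ J ⊆ A`, the extra condition in `J ≤_A I`. So adding
the choice formulas turns `≤_σ`-minimality into `≤_A`-minimality. -/

namespace Formula

variable {σ : Type}

@[simp]
theorem not_sat_bot (J : Set σ) : ¬ Sat J (bot : Formula σ) :=
  fun ⟨e, _⟩ => e.elim

@[simp]
theorem reduct_bot (I : Set σ) : reduct I (bot : Formula σ) = bot := by
  simp only [bot, reduct]
  exact congrArg _ (funext fun e => e.elim)

theorem sat_reduct_and {I J : Set σ} {F G : Formula σ} :
    Sat J (reduct I (F.and G)) ↔ Sat J (reduct I F) ∧ Sat J (reduct I G) :=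
  ⟨fun h => ⟨h true, h false⟩, fun h b => b.casesOn h.2 h.1⟩

/-- `(¬p)^I` is `⊥` when `p ∈ I` and `⊥ → ⊥` otherwise. -/
theorem sat_reduct_em_atom {I J : Set σ} {p : σ} :
    Sat J (reduct I ((atom p).or (atom p).neg)) ↔ (p ∈ I → p ∈ J) := by
  by_cases hp : p ∈ I <;> simp [or, neg, reduct, Sat, hp]

theorem sat_reduct_em_compl {A I J : Set σ} :
    Sat J (reduct I (conj (↥Aᶜ) fun p => (atom p.val).or (atom p.val).neg)) ↔ I \ A ⊆ J := by
  simp only [reduct, Sat]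
  exact ⟨fun h p hp => sat_reduct_em_atom.1 (h ⟨p, hp.2⟩) hp.1,
    fun h p => sat_reduct_em_atom.2 fun hpI => h ⟨hpI, p.2⟩⟩

theorem aStable_iff_minimal_above_diff {A I : Set σ} {F : Formula σ} :
    AStable A I F ↔ Sat I (reduct I F) ∧
      ∀ J : Set σ, J ⊆ I → I \ A ⊆ J → Sat J (reduct I F) → J = I := by
  simp only [AStable, Set.sdiff_subset_comm]

end Formula

/-- `I` is an `A`-stable model of `F` iff `I` is a stable model of
`F ∧ ⋀_{p ∈ σ \ A} (p ∨ ¬p)`. -/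
theorem astable_iff_stable_with_choice {σ : Type}
    (F : Formula σ) (A I : Set σ) :
    Formula.AStable A I F ↔
      Formula.Stable I
        (Formula.and F
          (Formula.conj (↥Aᶜ)
            (fun p => Formula.or (Formula.atom p.val) (Formula.neg (Formula.atom p.val))))) := by
  rw [Formula.aStable_iff_minimal_above_diff, Formula.Stable, Formula.AStable]
  simp only [Formula.sat_reduct_and, Formula.sat_reduct_em_compl, Set.sdiff_subset, and_true,
    Set.subset_univ, forall_const, and_imp]
  exact and_congr_right' <| forall_congr' fun J => forall_congr' fun _ => forall_comm
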